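/- arXiv:1509.01903 — 5 statements merged into one kernel-verified Lean document; each statement's English description precedes it below -/
import Mathlib

section
/- There exists a square-summable sequence θ that does not satisfy the polished tail condition for any choice of constants N₀, L₀, ρ; for example θ_j = 2^{-k} when j = 2^{2^k} for some k ∈ ℕ and θ_j = 0 otherwise. -/
/-- Tail sum `∑_{j ≥ N} θ_j²`. -/
noncomputable def tailSum (θ : ℕ → ℝ) (N : ℕ) : ℝ :=
  ∑' j : ℕ, if N ≤ j then θ j ^ 2 else 0

/-- Block sum `∑_{j = N}^{ρN} θ_j²`. -/
noncomputable def blockSum (θ : ℕ → ℝ) (N ρ : ℕ) : ℝ :=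
  ∑ j ∈ Finset.Icc N (ρ * N), θ j ^ 2

/-- Polished tail condition with constants `N₀, L₀, ρ`. -/
def PolishedTail (θ : ℕ → ℝ) (N₀ : ℕ) (L₀ : ℝ) (ρ : ℕ) : Prop :=
  ∀ N : ℕ, N₀ < N → tailSum θ N ≤ L₀ * blockSum θ N ρ

/-!
A sequence supported on the very sparse set `{2^(2^k)}` has arbitrarily long gaps
`(n, n²)` in its support. Starting right after a support point `n`, the block `[N, ρN]`
with `N = n + 1` lies inside such a gap once `n > 2ρ`, so the block sum vanishes while the
tail sum, which still contains the next support point `n²`, is positive.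
-/

open Finset Function

lemma tailSum_pos {θ : ℕ → ℝ} (hθ : Summable fun j => θ j ^ 2) {N j : ℕ} (hj : N ≤ j)
    (hθj : θ j ≠ 0) : 0 < tailSum θ N := by
  have hnonneg (i : ℕ) : 0 ≤ if N ≤ i then θ i ^ 2 else 0 := by split <;> positivity
  refine Summable.tsum_pos ?_ hnonneg j (by rw [if_pos hj]; positivity)
  exact hθ.of_nonneg_of_le hnonneg fun i => by split <;> simp [sq_nonneg]

theorem not_polishedTail_of_gaps {θ : ℕ → ℝ} (hθ : Summable fun j => θ j ^ 2) {ρ : ℕ}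
    (hgaps : ∀ N₀ : ℕ, ∃ N > N₀, (∀ j ∈ Icc N (ρ * N), θ j = 0) ∧ ∃ j ≥ N, θ j ≠ 0)
    (N₀ : ℕ) (L₀ : ℝ) : ¬ PolishedTail θ N₀ L₀ ρ := by
  obtain ⟨N, hN₀N, hgap, j, hNj, hθj⟩ := hgaps N₀
  have hblock : blockSum θ N ρ = 0 :=
    sum_eq_zero fun i hi => by simp [hgap i hi]
  intro hpolished
  have := hpolished N hN₀N
  rw [hblock, mul_zero] at this
  exact this.not_gt (tailSum_pos hθ hNj hθj)

def sparseIndex (k : ℕ) : ℕ := 2 ^ 2 ^ k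

lemma sparseIndex_strictMono : StrictMono sparseIndex := fun _ _ h =>
  Nat.pow_lt_pow_right one_lt_two (Nat.pow_lt_pow_right one_lt_two h)

lemma sparseIndex_succ (k : ℕ) : sparseIndex (k + 1) = sparseIndex k ^ 2 := by
  simp only [sparseIndex, pow_succ, pow_mul]

lemma sparseIndex_notMem_Icc {k ρ : ℕ} (hk : 2 * ρ < sparseIndex k) (m : ℕ) :
    sparseIndex m ∉ Icc (sparseIndex k + 1) (ρ * (sparseIndex k + 1)) := by
  rw [mem_Icc, not_and_or, not_le, not_le]
  rcases le_or_gt m k with hmk | hkm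
  · exact .inl (Nat.lt_succ_of_le (sparseIndex_strictMono.monotone hmk))
  · have hnext : sparseIndex (k + 1) ≤ sparseIndex m := sparseIndex_strictMono.monotone hkm
    rw [sparseIndex_succ] at hnext
    right
    nlinarith

noncomputable def sparseSeq : ℕ → ℝ :=
  extend sparseIndex (fun k => (2 : ℝ)⁻¹ ^ k) 0

lemma sparseSeq_sparseIndex (k : ℕ) : sparseSeq (sparseIndex k) = (2 : ℝ)⁻¹ ^ k :=
  sparseIndex_strictMono.injective.extend_apply _ _ k

lemma sparseSeq_eq_zero {j : ℕ} (hj : ∀ k, sparseIndex k ≠ j) : sparseSeq j = 0 :=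
  extend_apply' _ _ j fun ⟨k, hk⟩ => hj k hk

lemma summable_sparseSeq_sq : Summable fun j => sparseSeq j ^ 2 := by
  have hsq : (fun j => sparseSeq j ^ 2) = extend sparseIndex (fun k => ((2 : ℝ)⁻¹ ^ 2) ^ k) 0 := by
    funext j
    rw [sparseSeq, apply_extend (· ^ 2)]
    simp only [comp_def, Pi.zero_apply, ← pow_mul, mul_comm, ne_eq, OfNat.ofNat_ne_zero,
      not_false_eq_true, zero_pow]
    rfl
  rw [hsq, summable_extend_zero sparseIndex_strictMono.injective]
  exact summable_geometric_of_lt_one (by positivity) (by norm_num)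

lemma sparseSeq_gaps (ρ N₀ : ℕ) :
    ∃ N > N₀, (∀ j ∈ Icc N (ρ * N), sparseSeq j = 0) ∧ ∃ j ≥ N, sparseSeq j ≠ 0 := by
  set k := N₀ + 2 * ρ + 1
  have hk : k ≤ sparseIndex k := sparseIndex_strictMono.id_le k
  refine ⟨sparseIndex k + 1, by omega, fun j hj => ?_, sparseIndex (k + 1), ?_, ?_⟩
  · exact sparseSeq_eq_zero fun m hm => sparseIndex_notMem_Icc (by omega) m (hm ▸ hj)
  · exact sparseIndex_strictMono (Nat.lt_succ_self k)
  · rw [sparseSeq_sparseIndex]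
    positivity

theorem stmt_3 :
    ∃ θ : ℕ → ℝ, (Summable fun j => θ j ^ 2) ∧
      ∀ (N₀ ρ : ℕ) (L₀ : ℝ), 0 < L₀ → 2 ≤ ρ → ¬ PolishedTail θ N₀ L₀ ρ :=
  ⟨sparseSeq, summable_sparseSeq_sq, fun N₀ ρ L₀ _ _ =>
    not_polishedTail_of_gaps summable_sparseSeq_sq (sparseSeq_gaps ρ) N₀ L₀⟩
end

section
/- Upper bound on posterior spread: ∑_{i=1}^∞ 1/(i^{1+2α} + n) ≤ C(α) · n^{-2α/(1+2α)} for all n ≥ 1, where C(α) depends only on α > 0. -/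
/-!
Split the series at `J = ⌈n ^ (1 / (1 + 2α))⌉`. Each of the first `J` terms is at most `1 / n`,
contributing `J / n ≲ n ^ (-2α / (1 + 2α))`. The remaining terms are at most `i ^ (-(1 + 2α))`,
and comparison with `∫_J^∞ x ^ (-(1 + 2α)) dx = J ^ (-2α) / (2α)` bounds them by
`n ^ (-2α / (1 + 2α)) / (2α)`.
-/

open Real Finset

lemma tsum_le_add_of_sum_range_le_of_sum_Ico_le {f : ℕ → ℝ} (hf : ∀ i, 0 ≤ f i) (J : ℕ)
    {A B : ℝ} (hA : ∑ i ∈ range J, f i ≤ A) (hB : ∀ m, ∑ i ∈ Ico J m, f i ≤ B) :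
    ∑' i, f i ≤ A + B := by
  refine Real.tsum_le_of_sum_range_le hf fun m => ?_
  calc ∑ i ∈ range m, f i
      ≤ ∑ i ∈ range (max J m), f i :=
        sum_le_sum_of_subset_of_nonneg (range_subset_range.mpr (le_max_right J m))
          fun i _ _ => hf i
    _ = ∑ i ∈ range J, f i + ∑ i ∈ Ico J (max J m), f i :=
        (sum_range_add_sum_Ico f (le_max_left J m)).symm
    _ ≤ A + B := add_le_add hA (hB _)

lemma sum_Ico_add_one_rpow_neg_le {q : ℝ} (hq : 0 < q) {J : ℕ} (hJ : 0 < J) (m : ℕ) :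
    ∑ i ∈ Ico J m, ((i : ℝ) + 1) ^ (-(1 + q)) ≤ (J : ℝ) ^ (-q) / q := by
  have hJ' : (0 : ℝ) < J := by exact_mod_cast hJ
  have hexp : -(1 + q) < -1 := by linarith
  have hanti : AntitoneOn (fun x : ℝ => x ^ (-(1 + q))) (Set.Icc (J : ℝ) m) :=
    (antitoneOn_rpow_Ioi_of_exponent_nonpos (by linarith)).mono
      fun x hx => hJ'.trans_le hx.1
  have hsum := hanti.sum_Ico_le_integral (integrableOn_Ioi_rpow_of_lt hexp hJ')
    fun x hx => rpow_nonneg (hJ'.trans hx).le _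
  rw [integral_Ioi_rpow_of_lt hexp hJ'] at hsum
  convert hsum using 1
  · push_cast
    rfl
  · rw [show -(1 + q) + 1 = -q by ring, neg_div_neg_eq]

lemma one_div_rpow_add_le_rpow_neg {x c : ℝ} (hx : 0 < x) (hc : 0 ≤ c) (p : ℝ) :
    1 / (x ^ p + c) ≤ x ^ (-p) := by
  rw [rpow_neg hx.le, ← one_div]
  exact one_div_le_one_div_of_le (rpow_pos_of_pos hx p) (le_add_of_nonneg_right hc)

lemma natCeil_rpow_div_le {n q : ℝ} (hn : 1 ≤ n) (hq : 0 ≤ q) :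
    (⌈n ^ (1 / (1 + q))⌉₊ : ℝ) / n ≤ 2 * n ^ (-q / (1 + q)) := by
  have hn0 : 0 < n := by linarith
  have hr : 2⁻¹ ≤ n ^ (1 / (1 + q)) :=
    le_trans (by norm_num) (one_le_rpow hn (by positivity))
  calc (⌈n ^ (1 / (1 + q))⌉₊ : ℝ) / n
      ≤ 2 * n ^ (1 / (1 + q)) / n := by gcongr; exact Nat.ceil_le_two_mul hr
    _ = 2 * n ^ (1 / (1 + q) - 1) := by rw [rpow_sub hn0, rpow_one, mul_div_assoc]
    _ = 2 * n ^ (-q / (1 + q)) := by congr 2; field_simp; ring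

lemma natCeil_rpow_rpow_neg_le {n q : ℝ} (hn : 0 < n) (hq : 0 ≤ q) :
    (⌈n ^ (1 / (1 + q))⌉₊ : ℝ) ^ (-q) ≤ n ^ (-q / (1 + q)) := by
  have hr : 0 < n ^ (1 / (1 + q)) := rpow_pos_of_pos hn _
  calc (⌈n ^ (1 / (1 + q))⌉₊ : ℝ) ^ (-q)
      ≤ (n ^ (1 / (1 + q))) ^ (-q) := rpow_le_rpow_of_nonpos hr (Nat.le_ceil _) (by linarith)
    _ = n ^ (-q / (1 + q)) := by rw [← rpow_mul hn.le]; congr 1; ring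

/-- Upper bound on posterior spread: `∑_{i≥1} 1/(i^{1+2α} + n) ≤ C(α)·n^{-2α/(1+2α)}`
for all `n ≥ 1`, with `C(α)` depending only on `α > 0`. -/
theorem stmt_11 (α : ℝ) (hα : 0 < α) :
    ∃ C : ℝ, 0 < C ∧ ∀ n : ℕ, 1 ≤ n →
      (∑' i : ℕ, 1 / (((i : ℝ) + 1) ^ (1 + 2 * α) + n))
        ≤ C * (n : ℝ) ^ (-(2 * α) / (1 + 2 * α)) := by
  set q := 2 * α
  have hq : 0 < q := by positivity
  refine ⟨2 + 1 / q, by positivity, fun n hn => ?_⟩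
  have hn1 : (1 : ℝ) ≤ n := by exact_mod_cast hn
  set J := ⌈(n : ℝ) ^ (1 / (1 + q))⌉₊
  have hJ : 0 < J := Nat.ceil_pos.mpr (rpow_pos_of_pos (by linarith) _)
  have hhead : ∑ i ∈ range J, 1 / (((i : ℝ) + 1) ^ (1 + q) + n) ≤ J / n := by
    refine (sum_le_card_nsmul _ _ (1 / (n : ℝ)) fun i _ => ?_).trans_eq
      (by simp [div_eq_mul_inv])
    exact one_div_le_one_div_of_le (by linarith) (le_add_of_nonneg_left (by positivity))
  have htail (m : ℕ) :
      ∑ i ∈ Ico J m, 1 / (((i : ℝ) + 1) ^ (1 + q) + n) ≤ (J : ℝ) ^ (-q) / q :=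
    (sum_le_sum fun i _ =>
      one_div_rpow_add_le_rpow_neg (by positivity) (Nat.cast_nonneg n) _).trans
        (sum_Ico_add_one_rpow_neg_le hq hJ m)
  calc (∑' i : ℕ, 1 / (((i : ℝ) + 1) ^ (1 + q) + n))
      ≤ J / n + (J : ℝ) ^ (-q) / q :=
        tsum_le_add_of_sum_range_le_of_sum_Ico_le (fun i => by positivity) J hhead htail
    _ ≤ 2 * (n : ℝ) ^ (-q / (1 + q)) + (n : ℝ) ^ (-q / (1 + q)) / q :=
        add_le_add (natCeil_rpow_div_le hn1 hq.le)
          (div_le_div_of_nonneg_right (natCeil_rpow_rpow_neg_le (by linarith) hq.le) hq.le)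
    _ = (2 + 1 / q) * (n : ℝ) ^ (-q / (1 + q)) := by ring
end

section
/- Bias bound under Sobolev smoothness: if ∑_{i=1}^∞ i^{2β} θ_i² ≤ B² (Sobolev ball of smoothness β > 0), then the squared bias of the Gaussian-posterior mean, ∑_{i=1}^∞ ( θ_i · 1/(1 + n i^{-1-2α}) )², is bounded by B² · max(J^{-2β}, sup_{i ≤ J} (i^{1+2α}/(i^{1+2α}+n))² · i^{-2β}) arguments; in particular it is at most B² · ( J^{-2β} + J^{2+4α}/n² ) for any J ≥ 1 (up to constants), where the posterior mean is θ̂_i = n λ_i/(1 + n λ_i) X_i with λ_i = i^{-1-2α}. -/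
/-- Bias bound under Sobolev smoothness: if `∑_{i≥1} i^{2β} θ_i² ≤ B²`, then the squared
bias of the Gaussian-posterior mean in the white noise model with prior variances
`λ_i = i^{-1-2α}`, namely `∑_{i≥1} θ_i² · (i^{1+2α}/(i^{1+2α}+n))²`, is at most
`B²·(J^{-2β} + J^{2+4α}/n²)` for every `J ≥ 1`.  (Coordinates are indexed from 1, realized
as `i + 1` for `i : ℕ`.) -/
theorem stmt_12 (α β B : ℝ) (hα : 0 < α) (hβ : 0 < β) (n : ℕ) (hn : 1 ≤ n)
    (θ : ℕ → ℝ)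
    (hsum : Summable fun i : ℕ => ((i : ℝ) + 1) ^ (2 * β) * θ i ^ 2)
    (hSob : (∑' i : ℕ, ((i : ℝ) + 1) ^ (2 * β) * θ i ^ 2) ≤ B ^ 2) :
    ∀ J : ℕ, 1 ≤ J →
      (∑' i : ℕ, θ i ^ 2 *
          (((i : ℝ) + 1) ^ (1 + 2 * α) / (((i : ℝ) + 1) ^ (1 + 2 * α) + n)) ^ 2)
        ≤ B ^ 2 * ((J : ℝ) ^ (-(2 * β)) + (J : ℝ) ^ (2 + 4 * α) / (n : ℝ) ^ 2) := by
  intro J hJ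
  have hJ1 : (1:ℝ) ≤ (J:ℝ) := by exact_mod_cast hJ
  have hJ0 : (0:ℝ) < (J:ℝ) := by linarith
  have hn1 : (1:ℝ) ≤ (n:ℝ) := by exact_mod_cast hn
  have hn0 : (0:ℝ) < (n:ℝ) := by linarith
  set K : ℝ := (J:ℝ) ^ (-(2*β)) + (J:ℝ) ^ (2 + 4*α) / (n:ℝ)^2 with hK
  have hKnn : 0 ≤ K := by positivity
  have key : ∀ i : ℕ, θ i ^ 2 *
      (((i:ℝ)+1) ^ (1+2*α) / (((i:ℝ)+1) ^ (1+2*α) + n)) ^ 2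
      ≤ K * (((i:ℝ)+1) ^ (2*β) * θ i ^ 2) := by
    intro i
    set c : ℝ := (i:ℝ) + 1 with hc
    have hc1 : (1:ℝ) ≤ c := by
      have : (0:ℝ) ≤ (i:ℝ) := Nat.cast_nonneg i
      linarith
    have hc0 : (0:ℝ) < c := by linarith
    have hcp : (0:ℝ) < c ^ (1+2*α) := Real.rpow_pos_of_pos hc0 _
    have hden : (0:ℝ) < c ^ (1+2*α) + n := by linarith
    have hcb : (0:ℝ) < c ^ (2*β) := Real.rpow_pos_of_pos hc0 _
    have hcb1 : (1:ℝ) ≤ c ^ (2*β) := Real.one_le_rpow hc1 (by linarith)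
    have main : (c ^ (1+2*α) / (c ^ (1+2*α) + n)) ^ 2 ≤ K * c ^ (2*β) := by
      rcases le_total (J:ℝ) c with hJc | hcJ
      · -- c ≥ J : ratio ≤ 1, use first term
        have hr1 : c ^ (1+2*α) / (c ^ (1+2*α) + n) ≤ 1 := by
          rw [div_le_one hden]; linarith
        have hr0 : 0 ≤ c ^ (1+2*α) / (c ^ (1+2*α) + n) := by positivity
        have h1 : (c ^ (1+2*α) / (c ^ (1+2*α) + n)) ^ 2 ≤ 1 := by
          nlinarith
        have h2 : (1:ℝ) ≤ (J:ℝ) ^ (-(2*β)) * c ^ (2*β) := by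
          have hJb : (J:ℝ) ^ (2*β) ≤ c ^ (2*β) :=
            Real.rpow_le_rpow (le_of_lt hJ0) hJc (by linarith)
          have : (J:ℝ) ^ (-(2*β)) * (J:ℝ) ^ (2*β) = 1 := by
            rw [← Real.rpow_add hJ0]; simp
          calc (1:ℝ) = (J:ℝ) ^ (-(2*β)) * (J:ℝ) ^ (2*β) := this.symm
            _ ≤ (J:ℝ) ^ (-(2*β)) * c ^ (2*β) := by
                apply mul_le_mul_of_nonneg_left hJb
                positivity
        have h3 : (J:ℝ) ^ (-(2*β)) * c ^ (2*β) ≤ K * c ^ (2*β) := by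
          apply mul_le_mul_of_nonneg_right _ (le_of_lt hcb)
          have : (0:ℝ) ≤ (J:ℝ) ^ (2 + 4*α) / (n:ℝ)^2 := by positivity
          rw [hK]; linarith
        exact h1.trans (h2.trans h3)
      · -- c ≤ J : ratio ≤ c^{1+2α}/n
        have hr : c ^ (1+2*α) / (c ^ (1+2*α) + n) ≤ c ^ (1+2*α) / n := by
          apply div_le_div_of_nonneg_left (le_of_lt hcp) hn0
          linarith
        have hr0 : 0 ≤ c ^ (1+2*α) / (c ^ (1+2*α) + n) := by positivity
        have h1 : (c ^ (1+2*α) / (c ^ (1+2*α) + n)) ^ 2 ≤ (c ^ (1+2*α))^2 / (n:ℝ)^2 := by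
          rw [← div_pow]
          exact pow_le_pow_left₀ hr0 hr 2
        have hsq : (c ^ (1+2*α))^2 = c ^ (2 + 4*α) := by
          rw [← Real.rpow_natCast (c ^ (1+2*α)) 2, ← Real.rpow_mul (le_of_lt hc0)]
          norm_num; ring_nf
        have h2 : c ^ (2 + 4*α) ≤ (J:ℝ) ^ (2 + 4*α) :=
          Real.rpow_le_rpow (le_of_lt hc0) hcJ (by linarith)
        have h3 : (c ^ (1+2*α))^2 / (n:ℝ)^2 ≤ K * c ^ (2*β) := by
          rw [hsq]
          have step1 : c ^ (2+4*α) / (n:ℝ)^2 ≤ (J:ℝ) ^ (2+4*α) / (n:ℝ)^2 := by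
            apply div_le_div_of_nonneg_right h2 (by positivity)
          have step2 : (J:ℝ) ^ (2+4*α) / (n:ℝ)^2 ≤ K * c ^ (2*β) := by
            have hKge : (J:ℝ) ^ (2+4*α) / (n:ℝ)^2 ≤ K := by
              have : (0:ℝ) ≤ (J:ℝ) ^ (-(2*β)) := by positivity
              rw [hK]; linarith
            calc (J:ℝ) ^ (2+4*α) / (n:ℝ)^2 ≤ K := hKge
              _ = K * 1 := (mul_one K).symm
              _ ≤ K * c ^ (2*β) := by
                  apply mul_le_mul_of_nonneg_left hcb1 hKnn
          linarith
        linarith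
    calc θ i ^ 2 * (c ^ (1+2*α) / (c ^ (1+2*α) + n)) ^ 2
        ≤ θ i ^ 2 * (K * c ^ (2*β)) := by
          apply mul_le_mul_of_nonneg_left main (sq_nonneg _)
      _ = K * (c ^ (2*β) * θ i ^ 2) := by ring
  have hsumK : Summable fun i : ℕ => K * (((i:ℝ)+1) ^ (2*β) * θ i ^ 2) :=
    hsum.mul_left K
  have hsumf : Summable fun i : ℕ => θ i ^ 2 *
      (((i:ℝ)+1) ^ (1+2*α) / (((i:ℝ)+1) ^ (1+2*α) + n)) ^ 2 := by
    apply Summable.of_nonneg_of_le (fun i => by positivity) key hsumK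
  calc (∑' i : ℕ, θ i ^ 2 *
          (((i:ℝ)+1) ^ (1+2*α) / (((i:ℝ)+1) ^ (1+2*α) + n)) ^ 2)
      ≤ ∑' i : ℕ, K * (((i:ℝ)+1) ^ (2*β) * θ i ^ 2) :=
        Summable.tsum_le_tsum key hsumf hsumK
    _ = K * ∑' i : ℕ, ((i:ℝ)+1) ^ (2*β) * θ i ^ 2 := tsum_mul_left
    _ ≤ K * B ^ 2 := mul_le_mul_of_nonneg_left hSob hKnn
    _ = B ^ 2 * K := mul_comm _ _
end

section
/- Self-similar implies polished tails: if there exist constants 0 < c ≤ C, β > 0 and N₁ such that c·N^{-2β} ≤ ∑_{j≥N} θ_j² ≤ C·N^{-2β} for all N ≥ N₁, then θ has polished tails for suitable constants (N₀, L₀, ρ) with ρ chosen so that C·ρ^{-2β} < c. -/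
/-!
Let `K = C ρ^{-2β}` with `ρ` so large that `K < c`. For `N > N₁` the far tail satisfies
`T_{ρN+1} ≤ T_{ρN} ≤ K N^{-2β} ≤ (K / c) T_N`, so the block `T_N - T_{ρN+1}` carries at least the
fraction `1 - K / c` of the tail `T_N`, and `L₀ = (1 - K / c)⁻¹` works.
-/

open Filter Topology

lemma summable_tail_sq {θ : ℕ → ℝ} (hθ : Summable fun j => θ j ^ 2) (N : ℕ) :
    Summable fun j : ℕ => if N ≤ j then θ j ^ 2 else 0 :=
  hθ.of_nonneg_of_le (fun j => by split_ifs <;> positivity)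
    (fun j => by split_ifs <;> first | exact le_rfl | positivity)

lemma tailSum_antitone {θ : ℕ → ℝ} (hθ : Summable fun j => θ j ^ 2) : Antitone (tailSum θ) :=
  fun M N hMN => (summable_tail_sq hθ N).tsum_le_tsum
    (fun j => by split_ifs <;> first | omega | exact le_rfl | positivity) (summable_tail_sq hθ M)

lemma tailSum_eq_sum_Icc_add_tailSum {θ : ℕ → ℝ} (hθ : Summable fun j => θ j ^ 2) {N M : ℕ}
    (h : N ≤ M + 1) :
    tailSum θ N = ∑ j ∈ Finset.Icc N M, θ j ^ 2 + tailSum θ (M + 1) := by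
  have hsplit : ∀ j : ℕ, (if N ≤ j then θ j ^ 2 else 0) =
      (if j ∈ Finset.Icc N M then θ j ^ 2 else 0) + (if M + 1 ≤ j then θ j ^ 2 else 0) := by
    intro j
    simp only [Finset.mem_Icc]
    split_ifs <;> first | omega | simp
  have hfinite : ∀ j ∉ Finset.Icc N M, (if j ∈ Finset.Icc N M then θ j ^ 2 else 0) = 0 :=
    fun j hj => if_neg hj
  rw [tailSum, tsum_congr hsplit,
    (summable_of_ne_finset_zero hfinite).tsum_add (summable_tail_sq hθ (M + 1)),
    tsum_eq_sum hfinite, Finset.sum_ite_mem, Finset.inter_self, tailSum]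

lemma blockSum_eq_tailSum_sub {θ : ℕ → ℝ} (hθ : Summable fun j => θ j ^ 2) (N : ℕ) {ρ : ℕ}
    (hρ : 0 < ρ) : blockSum θ N ρ = tailSum θ N - tailSum θ (ρ * N + 1) := by
  rw [tailSum_eq_sum_Icc_add_tailSum hθ (M := ρ * N) (by nlinarith), blockSum]
  ring

lemma polishedTail_of_tailSum_le_mul {θ : ℕ → ℝ} (hθ : Summable fun j => θ j ^ 2)
    {N₀ ρ : ℕ} (hρ : 0 < ρ) {ε : ℝ} (hε : ε < 1)
    (hfar : ∀ N, N₀ < N → tailSum θ (ρ * N + 1) ≤ ε * tailSum θ N) :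
    PolishedTail θ N₀ (1 - ε)⁻¹ ρ := by
  intro N hN
  have hblock : (1 - ε) * tailSum θ N ≤ blockSum θ N ρ := by
    rw [blockSum_eq_tailSum_sub hθ N hρ]
    linarith [hfar N hN]
  rw [← div_eq_inv_mul, le_div_iff₀ (by linarith)]
  linarith

lemma exists_nat_mul_rpow_neg_lt (C : ℝ) {c s : ℝ} (hc : 0 < c) (hs : 0 < s) :
    ∃ ρ : ℕ, 2 ≤ ρ ∧ C * (ρ : ℝ) ^ (-s) < c := by
  have hlim : Tendsto (fun n : ℕ => C * (n : ℝ) ^ (-s)) atTop (𝓝 0) := by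
    simpa using ((tendsto_rpow_neg_atTop hs).comp tendsto_natCast_atTop_atTop).const_mul C
  exact ((eventually_ge_atTop 2).and (hlim.eventually_lt_const hc)).exists

theorem stmt_17_general (θ : ℕ → ℝ) (hθ : Summable fun j => θ j ^ 2)
    (c C β : ℝ) (hc : 0 < c) (hcC : c ≤ C) (hβ : 0 < β)
    (N₁ : ℕ)
    (hself : ∀ N : ℕ, N₁ ≤ N →
      c * (N : ℝ) ^ (-(2 * β)) ≤ tailSum θ N ∧
      tailSum θ N ≤ C * (N : ℝ) ^ (-(2 * β))) :
    ∃ (N₀ ρ : ℕ) (L₀ : ℝ), 1 ≤ L₀ ∧ 2 ≤ ρ ∧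
      C * (ρ : ℝ) ^ (-(2 * β)) < c ∧ PolishedTail θ N₀ L₀ ρ := by
  obtain ⟨ρ, hρ, hK⟩ := exists_nat_mul_rpow_neg_lt C hc (by positivity : 0 < 2 * β)
  set K := C * (ρ : ℝ) ^ (-(2 * β))
  have hK₀ : 0 ≤ K / c := div_nonneg (mul_nonneg (by linarith) (by positivity)) hc.le
  have hK₁ : K / c < 1 := (div_lt_one hc).mpr hK
  refine ⟨N₁, ρ, (1 - K / c)⁻¹, (one_le_inv₀ (by linarith)).mpr (by linarith), hρ, hK,
    polishedTail_of_tailSum_le_mul hθ (by omega) hK₁ fun N hN => ?_⟩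
  calc tailSum θ (ρ * N + 1) ≤ tailSum θ (ρ * N) := tailSum_antitone hθ (Nat.le_succ _)
    _ ≤ C * ((ρ * N : ℕ) : ℝ) ^ (-(2 * β)) := (hself _ (by nlinarith)).2
    _ = K / c * (c * (N : ℝ) ^ (-(2 * β))) := by
      rw [Nat.cast_mul, Real.mul_rpow (by positivity) (by positivity)]
      field_simp
      ring
    _ ≤ K / c * tailSum θ N := mul_le_mul_of_nonneg_left (hself N hN.le).1 hK₀

theorem stmt_17 (θ : ℕ → ℝ) (hθ : Summable fun j => θ j ^ 2)
    (c C β : ℝ) (hc : 0 < c) (hcC : c ≤ C) (hβ : 0 < β)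
    (N₁ : ℕ) (hN₁ : 1 ≤ N₁)
    (hself : ∀ N : ℕ, N₁ ≤ N →
      c * (N : ℝ) ^ (-(2 * β)) ≤ tailSum θ N ∧
      tailSum θ N ≤ C * (N : ℝ) ^ (-(2 * β))) :
    ∃ (N₀ ρ : ℕ) (L₀ : ℝ), 1 ≤ L₀ ∧ 2 ≤ ρ ∧
      C * (ρ : ℝ) ^ (-(2 * β)) < c ∧ PolishedTail θ N₀ L₀ ρ :=
  stmt_17_general θ hθ c C β hc hcC hβ N₁ hself
end

section
/- For the Gaussian white noise posterior with prior variances λ_i = τ·i^{-1-2α} (τ > 0 fixed), the posterior mean θ̂_i = nλ_i X_i/(1 + nλ_i) satisfies the variance identity ∑_i Var_θ(θ̂_i) = ∑_i (nλ_i/(1+nλ_i))² / n, and this quantity is bounded above by ∑_i 1/(i^{1+2α}·τ^{-1} + n) ≤ C(α, τ)·n^{-2α/(1+2α)}. -/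
/-!
Coordinatewise, `(nλ/(1+nλ))²/n ≤ λ/(1+nλ) = 1/(λ⁻¹ + n)`. Each term `1/(i^β τ⁻¹ + n)`
(with `β = 1 + 2α`) is at most `min (1/n) (τ i^{-β})`. Splitting the series at
`N = ⌈n^{1/β}⌉`, the first `N` terms contribute at most `N/n ≍ n^{1/β - 1}`, and the tail is
compared with `∫_N^∞ τ x^{-β} dx = τ N^{1-β}/(β-1) ≲ n^{1/β - 1}`; note `1/β - 1 = -2α/(1+2α)`.
-/

open Finset

theorem shrinkage_sq_div_le_one_div_inv_add {L n : ℝ} (hL : 0 < L) (hn : 0 < n) :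
    (n * L / (1 + n * L)) ^ 2 / n ≤ 1 / (L⁻¹ + n) := by
  have hD : 0 < 1 + n * L := by positivity
  have hrhs : 1 / (L⁻¹ + n) = L / (1 + n * L) := by field_simp
  rw [hrhs, div_pow, div_div, div_le_div_iff₀ (by positivity) hD]
  nlinarith [mul_pos (mul_pos hn hL) hD]

theorem summable_nat_add_one_rpow_neg {β : ℝ} (hβ : 1 < β) :
    Summable fun i : ℕ => ((i : ℝ) + 1) ^ (-β) := by
  have h := (summable_nat_add_iff 1).2 (Real.summable_nat_rpow.2 (by linarith : -β < -1))
  simpa using h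

/-- The mean value theorem for `x ↦ x ^ (1 - β)` on `[x, x + 1]`. -/
theorem sub_one_mul_add_one_rpow_neg_le {β x : ℝ} (hβ : 1 < β) (hx : 0 < x) :
    (β - 1) * (x + 1) ^ (-β) ≤ x ^ (1 - β) - (x + 1) ^ (1 - β) := by
  obtain ⟨c, ⟨hxc, hcx⟩, hderiv⟩ := exists_hasDerivAt_eq_slope (fun y => y ^ (1 - β))
    (fun y => (1 - β) * y ^ (1 - β - 1)) (by linarith : x < x + 1)
    (continuousOn_id.rpow_const fun y hy => Or.inl (show 0 < y by linarith [hy.1]).ne')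
    (fun y hy => Real.hasDerivAt_rpow_const (Or.inl (show 0 < y by linarith [hy.1]).ne'))
  have hslope : x ^ (1 - β) - (x + 1) ^ (1 - β) = (β - 1) * c ^ (-β) := by
    rw [show (1 : ℝ) - β - 1 = -β by ring, add_sub_cancel_left, div_one] at hderiv
    linarith
  have hmono : (x + 1) ^ (-β) ≤ c ^ (-β) :=
    Real.rpow_le_rpow_of_nonpos (by linarith) hcx.le (by linarith)
  rw [hslope]
  exact mul_le_mul_of_nonneg_left hmono (by linarith)

/-- Integral test for the tail of `∑ i ^ (-β)`, via the telescoping bound above. -/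
theorem tsum_add_add_one_rpow_neg_le {β x : ℝ} (hβ : 1 < β) (hx : 0 < x) :
    ∑' i : ℕ, (x + i + 1) ^ (-β) ≤ x ^ (1 - β) / (β - 1) := by
  rw [le_div_iff₀ (by linarith), ← tsum_mul_right]
  refine Real.tsum_le_of_sum_range_le (fun i => by positivity) fun m => ?_
  calc ∑ i ∈ range m, (x + i + 1) ^ (-β) * (β - 1)
      ≤ ∑ i ∈ range m, ((x + i) ^ (1 - β) - (x + (i + 1 : ℕ)) ^ (1 - β)) := by
        refine sum_le_sum fun i _ => ?_
        rw [mul_comm, Nat.cast_succ, ← add_assoc]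
        exact sub_one_mul_add_one_rpow_neg_le hβ (by positivity)
    _ = x ^ (1 - β) - (x + m) ^ (1 - β) := by
        simpa using sum_range_sub' (fun i : ℕ => (x + i) ^ (1 - β)) m
    _ ≤ x ^ (1 - β) := sub_le_self _ (by positivity)

theorem one_div_rpow_mul_inv_add_le {β τ n : ℝ} (hτ : 0 < τ) (hn : 0 ≤ n) (i : ℕ) :
    1 / (((i : ℝ) + 1) ^ β * τ⁻¹ + n) ≤ τ * ((i : ℝ) + 1) ^ (-β) := by
  have hpos : 0 < ((i : ℝ) + 1) ^ β * τ⁻¹ := by positivity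
  calc 1 / (((i : ℝ) + 1) ^ β * τ⁻¹ + n) ≤ 1 / (((i : ℝ) + 1) ^ β * τ⁻¹) :=
        one_div_le_one_div_of_le hpos (le_add_of_nonneg_right hn)
    _ = τ * ((i : ℝ) + 1) ^ (-β) := by rw [Real.rpow_neg (by positivity)]; field_simp

theorem summable_one_div_rpow_mul_inv_add {β τ n : ℝ} (hβ : 1 < β) (hτ : 0 < τ) (hn : 0 ≤ n) :
    Summable fun i : ℕ => 1 / (((i : ℝ) + 1) ^ β * τ⁻¹ + n) :=
  ((summable_nat_add_one_rpow_neg hβ).mul_left τ).of_nonneg_of_le (fun _ => by positivity)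
    (one_div_rpow_mul_inv_add_le hτ hn)

theorem tsum_le_of_le_one_div_of_le_rpow_neg {g : ℕ → ℝ} {β τ n : ℝ} (hβ : 1 < β)
    (hτ : 0 ≤ τ) (hg : ∀ i, 0 ≤ g i) (hg_head : ∀ i, g i ≤ 1 / n)
    (hg_tail : ∀ i, g i ≤ τ * ((i : ℝ) + 1) ^ (-β)) {N : ℕ} (hN : 0 < N) :
    ∑' i, g i ≤ N / n + τ * (N ^ (1 - β) / (β - 1)) := by
  have hsum : Summable g :=
    (summable_nat_add_one_rpow_neg hβ).mul_left τ |>.of_nonneg_of_le hg hg_tail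
  have hhead : ∑ i ∈ range N, g i ≤ N / n := by
    have h := sum_le_card_nsmul (range N) g (1 / n) fun i _ => hg_head i
    rwa [card_range, nsmul_eq_mul, mul_one_div] at h
  have htail_le : ∀ i : ℕ, g (i + N) ≤ τ * ((N : ℝ) + i + 1) ^ (-β) := fun i => by
    simpa [add_comm] using hg_tail (i + N)
  have hsum_tail : Summable fun i => g (i + N) := (summable_nat_add_iff N).2 hsum
  have hdom_tail : Summable fun i : ℕ => τ * ((N : ℝ) + i + 1) ^ (-β) :=
    ((summable_nat_add_iff N).2 ((summable_nat_add_one_rpow_neg hβ).mul_left τ)).congr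
      fun i => by push_cast; ring_nf
  have htail : ∑' i, g (i + N) ≤ τ * (N ^ (1 - β) / (β - 1)) :=
    calc ∑' i, g (i + N) ≤ ∑' i : ℕ, τ * ((N : ℝ) + i + 1) ^ (-β) :=
          hsum_tail.tsum_le_tsum htail_le hdom_tail
      _ = τ * ∑' i : ℕ, ((N : ℝ) + i + 1) ^ (-β) := tsum_mul_left
      _ ≤ τ * (N ^ (1 - β) / (β - 1)) :=
          mul_le_mul_of_nonneg_left (tsum_add_add_one_rpow_neg_le hβ (by positivity)) hτ
  rw [← hsum.sum_add_tsum_nat_add N]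
  exact add_le_add hhead htail

/-- The split point is `N = ⌈n ^ (1 / β)⌉`, where the two bounds `1 / n` and `τ i ^ (-β)` meet. -/
theorem tsum_one_div_rpow_mul_inv_add_le {β τ n : ℝ} (hβ : 1 < β) (hτ : 0 < τ) (hn : 1 ≤ n) :
    ∑' i : ℕ, 1 / (((i : ℝ) + 1) ^ β * τ⁻¹ + n) ≤ (2 + τ / (β - 1)) * n ^ (β⁻¹ - 1) := by
  set r := n ^ β⁻¹
  have hr : 1 ≤ r := Real.one_le_rpow hn (by positivity)
  set N := ⌈r⌉₊
  have hN : 0 < N := Nat.ceil_pos.2 (by linarith)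
  have hrN : r ≤ N := Nat.le_ceil r
  have hNr : (N : ℝ) ≤ 2 * r := (Nat.ceil_lt_two_mul (by linarith)).le
  have hhead : (N : ℝ) / n ≤ 2 * n ^ (β⁻¹ - 1) := by
    rw [Real.rpow_sub_one (by positivity), ← mul_div_assoc]
    exact div_le_div_of_nonneg_right hNr (by linarith)
  have htail : (N : ℝ) ^ (1 - β) ≤ n ^ (β⁻¹ - 1) :=
    calc (N : ℝ) ^ (1 - β) ≤ r ^ (1 - β) :=
          Real.rpow_le_rpow_of_nonpos (by linarith) hrN (by linarith)
      _ = n ^ (β⁻¹ - 1) := by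
          rw [← Real.rpow_mul (by linarith)]
          congr 1
          field_simp
  refine (tsum_le_of_le_one_div_of_le_rpow_neg hβ hτ.le (fun _ => by positivity)
    (fun i => one_div_le_one_div_of_le (by linarith) (le_add_of_nonneg_left (by positivity)))
    (one_div_rpow_mul_inv_add_le hτ (by linarith)) hN).trans ?_
  calc N / n + τ * (N ^ (1 - β) / (β - 1)) = N / n + τ / (β - 1) * N ^ (1 - β) := by ring
    _ ≤ 2 * n ^ (β⁻¹ - 1) + τ / (β - 1) * n ^ (β⁻¹ - 1) := by gcongr
    _ = (2 + τ / (β - 1)) * n ^ (β⁻¹ - 1) := by ring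

/-- Posterior-mean variance bound in the Gaussian white noise model with prior variances
`λ_i = τ·i^{-1-2α}`: each coordinate of the posterior mean `θ̂_i = nλ_i X_i/(1+nλ_i)` has
variance `Var_θ(θ̂_i) = (nλ_i/(1+nλ_i))²/n`, the total variance `∑_i (nλ_i/(1+nλ_i))²/n`
is summable and bounded above by `∑_i 1/(i^{1+2α}·τ⁻¹ + n)`, which is itself at most
`C(α, τ)·n^{-2α/(1+2α)}`.  (Coordinates are indexed from 1, realized as `i + 1`.) -/
theorem stmt_18 (α τ : ℝ) (hα : 0 < α) (hτ : 0 < τ) :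
    ∃ C : ℝ, 0 < C ∧ ∀ n : ℕ, 1 ≤ n →
      ∀ lam : ℕ → ℝ, (∀ i : ℕ, lam i = τ * ((i : ℝ) + 1) ^ (-(1 + 2 * α))) →
        (Summable fun i : ℕ => ((n : ℝ) * lam i / (1 + n * lam i)) ^ 2 / n) ∧
        (∑' i : ℕ, ((n : ℝ) * lam i / (1 + n * lam i)) ^ 2 / n)
          ≤ (∑' i : ℕ, 1 / (((i : ℝ) + 1) ^ (1 + 2 * α) * τ⁻¹ + n)) ∧
        (∑' i : ℕ, 1 / (((i : ℝ) + 1) ^ (1 + 2 * α) * τ⁻¹ + n))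
          ≤ C * (n : ℝ) ^ (-(2 * α) / (1 + 2 * α)) := by
  have hβ : 1 < 1 + 2 * α := by linarith
  refine ⟨2 + τ / (2 * α), by positivity, fun n hn lam hlam => ?_⟩
  have hn0 : (0 : ℝ) < n := by exact_mod_cast hn
  have hlam_pos : ∀ i, 0 < lam i := fun i => by rw [hlam i]; positivity
  have hlam_inv : ∀ i : ℕ, ((i : ℝ) + 1) ^ (1 + 2 * α) * τ⁻¹ = (lam i)⁻¹ := fun i => by
    rw [hlam i, mul_inv, Real.rpow_neg (by positivity), inv_inv, mul_comm]
  have hterm : ∀ i : ℕ, ((n : ℝ) * lam i / (1 + n * lam i)) ^ 2 / n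
      ≤ 1 / (((i : ℝ) + 1) ^ (1 + 2 * α) * τ⁻¹ + n) := fun i => by
    rw [hlam_inv]
    exact shrinkage_sq_div_le_one_div_inv_add (hlam_pos i) hn0
  have hdom := summable_one_div_rpow_mul_inv_add hβ hτ hn0.le
  have hsum := hdom.of_nonneg_of_le (fun _ => by positivity) hterm
  refine ⟨hsum, hsum.tsum_le_tsum hterm hdom, ?_⟩
  have hexp : (1 + 2 * α)⁻¹ - 1 = -(2 * α) / (1 + 2 * α) := by field_simp; ring
  have h := tsum_one_div_rpow_mul_inv_add_le hβ hτ (by exact_mod_cast hn : (1 : ℝ) ≤ n)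
  rwa [hexp, show 1 + 2 * α - 1 = 2 * α by ring] at h
end
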